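/- arXiv:2411.07526 — 2 statements merged into one kernel-verified Lean document; each statement's English description precedes it below -/
import Mathlib

section
/- If a stable sorting function f sorts a sequence S first by remainder keys r(s) = (s - min(S)) mod d and then by quotient keys q(s) = ⌊(s - min(S))/d⌋ (QR Sort), the resulting sequence is sorted in nondecreasing order. -/
/-!
Write `s - mn = d q + r` with `0 ≤ r < d`; then `s ↦ (q, r)` is strictly monotone for the
lexicographic order. The second (stable) sort orders by `q`, and among elements with equal `q`
it keeps the order produced by the first sort, which is by `r`.
-/

section KeyOrder

variable {α β : Type*}

theorem key_le_trans [Preorder β] [DecidableLE β] (f : α → β) (a b c : α) :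
    decide (f a ≤ f b) → decide (f b ≤ f c) → decide (f a ≤ f c) := by
  simpa using le_trans

theorem key_le_total [LinearOrder β] (f : α → β) (a b : α) :
    (decide (f a ≤ f b) || decide (f b ≤ f a)) := by
  simpa using le_total (f a) (f b)

end KeyOrder

namespace List

variable {α : Type*} {le : α → α → Bool}

/-- Stability of `mergeSort`: it does not reorder elements that `le` cannot tell apart. -/
theorem filter_mergeSort_of_forall_le (trans : ∀ a b c, le a b → le b c → le a c)
    (total : ∀ a b, le a b || le b a) (p : α → Bool) (hp : ∀ a b, p a → p b → le a b)
    (l : List α) : (l.mergeSort le).filter p = l.filter p := by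
  have hsorted : (l.filter p).Pairwise (le · ·) :=
    pairwise_of_forall_mem_list fun a ha b hb => hp a b (mem_filter.1 ha).2 (mem_filter.1 hb).2
  have hsub : l.filter p <+ (l.mergeSort le).filter p := by
    simpa using (sublist_mergeSort trans total hsorted filter_sublist).filter p
  exact (hsub.eq_of_length ((mergeSort_perm l le).filter p).length_eq.symm).symm

theorem pairwise_mergeSort_lex (trans : ∀ a b c, le a b → le b c → le a c)
    (total : ∀ a b, le a b || le b a) {r : α → α → Prop} {l : List α} (hl : l.Pairwise r) :
    (l.mergeSort le).Pairwise fun a b => le a b ∧ (le b a → r a b) := by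
  refine (pairwise_mergeSort trans total l).and (pairwise_iff_forall_sublist.2 ?_)
  intro x y hsub hyx
  have hxx : le x x := by simpa using total x x
  have hxy : le x y := pairwise_iff_forall_sublist.1 (pairwise_mergeSort trans total l) hsub
  -- `y` lies in the `le`-class of `x`, which the stable sort leaves in its original order
  let equivX : α → Bool := fun z => le z x && le x z
  have hequiv : ∀ a b, equivX a → equivX b → le a b := by
    simp only [equivX, Bool.and_eq_true]
    exact fun a b ha hb => trans a x b ha.1 hb.2
  have hpair : [x, y] <+ l.filter equivX := by
    rw [← filter_mergeSort_of_forall_le trans total equivX hequiv l]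
    simpa [equivX, hxx, hxy, hyx] using hsub.filter equivX
  exact pairwise_iff_forall_sublist.1 hl (hpair.trans filter_sublist)

end List

theorem Int.le_of_ediv_le_of_emod_le {a b d : ℤ} (hd : 0 < d) (hq : a / d ≤ b / d)
    (hr : b / d ≤ a / d → a % d ≤ b % d) : a ≤ b := by
  rcases hq.lt_or_eq with hlt | heq
  · exact le_of_lt (lt_of_not_ge fun hba => hlt.not_ge (Int.ediv_le_ediv hd hba))
  · calc a = d * (a / d) + a % d := (Int.mul_ediv_add_emod a d).symm
      _ ≤ d * (b / d) + b % d := by rw [heq]; exact add_le_add_right (hr heq.ge) _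
      _ = b := Int.mul_ediv_add_emod b d

theorem qr_sort_sorts_general (S : List ℤ) (d mn : ℤ) (hd : 0 < d) :
    (((S.mergeSort (fun a b => decide ((a - mn) % d ≤ (b - mn) % d))).mergeSort
        (fun a b => decide ((a - mn) / d ≤ (b - mn) / d)))).Pairwise (· ≤ ·) := by
  have hsorted := List.pairwise_mergeSort (key_le_trans fun z => (z - mn) % d)
    (key_le_total fun z => (z - mn) % d) S
  refine (List.pairwise_mergeSort_lex (key_le_trans fun z => (z - mn) / d)
    (key_le_total fun z => (z - mn) / d) hsorted).imp ?_
  intro x y ⟨hq, hr⟩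
  simp only [decide_eq_true_eq] at hq hr
  simpa using Int.le_of_ediv_le_of_emod_le hd hq hr

theorem qr_sort_sorts (S : List ℤ) (d mn : ℤ) (hd : 0 < d)
    (hmn : S.minimum = (mn : WithTop ℤ)) :
    (((S.mergeSort (fun a b => decide ((a - mn) % d ≤ (b - mn) % d))).mergeSort
        (fun a b => decide ((a - mn) / d ≤ (b - mn) / d)))).Pairwise (· ≤ ·) :=
  qr_sort_sorts_general S d mn hd
end

section
/- Two successive stable sorts, first by a key r and then by a key q, produce a list sorted by the lexicographic key (q, r). -/
/-!
The second sort is stable: on each fibre of `q` it keeps the order produced by the first sort,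
which is sorted by `r`. So elements with equal `q` appear in `r`-order, all others in `q`-order.
-/

namespace List

section KeySort

variable {α β : Type*} [LinearOrder β] (f : α → β)

theorem decide_key_le_trans (a b c : α) :
    decide (f a ≤ f b) → decide (f b ≤ f c) → decide (f a ≤ f c) := by
  simpa using le_trans

theorem decide_key_le_total (a b : α) : (decide (f a ≤ f b) || decide (f b ≤ f a)) := by
  simpa using le_total (f a) (f b)

theorem pairwise_mergeSort_key (l : List α) :
    (l.mergeSort fun a b => decide (f a ≤ f b)).Pairwise fun a b => f a ≤ f b := by
  simpa using pairwise_mergeSort (decide_key_le_trans f) (decide_key_le_total f) l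

theorem filter_mergeSort_key (l : List α) (v : β) :
    (l.mergeSort fun a b => decide (f a ≤ f b)).filter (fun x => f x = v) =
      l.filter (fun x => f x = v) := by
  set p : α → Bool := fun x => f x = v
  have hfibre : ∀ x ∈ l.filter p, f x = v := fun x hx => of_decide_eq_true (mem_filter.mp hx).2
  have hsorted : (l.filter p).Pairwise fun a b => decide (f a ≤ f b) :=
    pairwise_of_forall_mem_list fun a ha b hb => by simp [hfibre a ha, hfibre b hb]
  have hsub : l.filter p <+ (l.mergeSort fun a b => decide (f a ≤ f b)).filter p := by
    simpa using ((sublist_mergeSort (decide_key_le_trans f) (decide_key_le_total f) hsorted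
      filter_sublist).filter p)
  exact (hsub.eq_of_length ((mergeSort_perm l _).filter p).length_eq.symm).symm

end KeySort

theorem pairwise_eq_imp_of_pairwise_filter {α γ : Type*} [DecidableEq γ] (f : α → γ)
    {R : α → α → Prop} {l : List α} (h : ∀ v, (l.filter fun x => f x = v).Pairwise R) :
    l.Pairwise fun a b => f a = f b → R a b := by
  refine pairwise_iff_forall_sublist.mpr fun {a b} hab hf => ?_
  exact pairwise_iff_forall_sublist.mp (h (f a)) (by simpa [hf] using hab.filter fun x => f x = f a)

end List

open List in
theorem double_stable_sort_lex {α β : Type*} [LinearOrder β]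
    (r q : α → β) (l : List α) :
    ((l.mergeSort (fun a b => decide (r a ≤ r b))).mergeSort
        (fun a b => decide (q a ≤ q b))).Pairwise
      (fun a b => q a < q b ∨ (q a = q b ∧ r a ≤ r b)) := by
  set L₁ := l.mergeSort fun a b => decide (r a ≤ r b)
  have hq : (L₁.mergeSort fun a b => decide (q a ≤ q b)).Pairwise fun a b => q a ≤ q b :=
    pairwise_mergeSort_key q L₁
  have hr : (L₁.mergeSort fun a b => decide (q a ≤ q b)).Pairwise
      fun a b => q a = q b → r a ≤ r b :=
    pairwise_eq_imp_of_pairwise_filter q fun v => by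
      rw [filter_mergeSort_key q L₁ v]
      exact (pairwise_mergeSort_key r l).sublist filter_sublist
  refine (hq.and hr).imp fun ⟨hle, hfibre⟩ => ?_
  rcases hle.lt_or_eq with h | h
  exacts [Or.inl h, Or.inr ⟨h, hfibre h⟩]
end
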